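/- arXiv:2505.03101 — 4 statements merged into one kernel-verified Lean document; each statement's English description precedes it below -/
import Mathlib

section
/- For every positive integer L, there exists a basis (β₁, ..., β_{2^L}) of GF(2^{2^L}) over GF(2) such that β₁ = 1 and β_i² - β_i = β_{i-1} for all i with 2 ≤ i ≤ 2^L. -/
/-!
In characteristic 2 the Artin–Schreier map `T x = x ^ 2 - x` is `𝔽₂`-linear, and a Cantor basis
is a Jordan chain of `T` ending at `1`. On `GF(2 ^ n)` with `n = 2 ^ L`, `T = F - 1` for the
Frobenius `F`, so `T ^ n = F ^ n - 1 = 0`. On the other hand `T ^ (n - 1)` is given by a polynomial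
of degree `2 ^ (n - 1) < 2 ^ n`, so some `γ` has `T ^ (n - 1) γ ≠ 0`; this element is killed by
`T`, hence equals `1`, and `γ, T γ, …, T ^ (n - 1) γ` is linearly independent, i.e. a basis.
-/

open Polynomial

theorem Module.End.linearIndependent_pow_apply {K V : Type*} [DivisionRing K] [AddCommGroup V]
    [Module K V] (f : Module.End K V) {v : V} {m : ℕ} (hm : (f ^ (m + 1)) v = 0)
    (hv : (f ^ m) v ≠ 0) : LinearIndependent K fun i : Fin (m + 1) => (f ^ (i : ℕ)) v := by
  induction m generalizing v with
  | zero => simpa [linearIndependent_unique_iff] using hv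
  | succ m ih =>
    rw [linearIndependent_finSucc]
    constructor
    · convert ih (v := f v) (by rwa [← Module.End.mul_apply, ← pow_succ]) (by
        rwa [← Module.End.mul_apply, ← pow_succ]) using 2 with i
      simp [Fin.tail, pow_succ]
    · have hspan : Submodule.span K (Set.range (Fin.tail fun i : Fin (m + 2) => (f ^ (i : ℕ)) v))
          ≤ LinearMap.ker (f ^ (m + 1)) := by
        rw [Submodule.span_le]
        rintro _ ⟨i, rfl⟩
        simp only [Fin.tail, Fin.val_succ, SetLike.mem_coe, LinearMap.mem_ker,
          ← Module.End.mul_apply, ← pow_add]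
        rw [show m + 1 + (i + 1) = i + (m + 2) by omega, pow_add, Module.End.mul_apply, hm,
          map_zero]
      exact fun hmem => hv (hspan hmem)

section ArtinSchreier

variable (K : Type*) [CommRing K] [CharP K 2] [Module (ZMod 2) K]

noncomputable def artinSchreier : Module.End (ZMod 2) K :=
  AddMonoidHom.toZModLinearMap 2 ((frobenius K 2).toAddMonoidHom - AddMonoidHom.id K)

variable {K}

theorem artinSchreier_apply (x : K) : artinSchreier K x = x ^ 2 - x := rfl

theorem artinSchreier_eq_zero_iff [IsDomain K] {x : K} :
    artinSchreier K x = 0 ↔ x = 0 ∨ x = 1 := by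
  rw [artinSchreier_apply, sq, ← mul_sub_one, mul_eq_zero, sub_eq_zero]

theorem artinSchreier_pow_two_pow_apply (m : ℕ) (x : K) :
    (artinSchreier K ^ 2 ^ m) x = x ^ 2 ^ 2 ^ m - x := by
  induction m generalizing x with
  | zero => exact artinSchreier_apply x
  | succ m ih =>
    rw [pow_succ, pow_mul, sq, Module.End.mul_apply, ih, ih, sub_pow_char_pow, ← pow_mul,
      ← pow_add, ← two_mul, ← pow_succ']
    linear_combination (x - x ^ 2 ^ 2 ^ m) * CharTwo.two_eq_zero (R := K)

end ArtinSchreier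

section Polynomial

variable (R : Type*) [CommRing R]

noncomputable def artinSchreierPoly : ℕ → R[X]
  | 0 => X
  | k + 1 => (X ^ 2 - X : R[X]).comp (artinSchreierPoly k)

variable {R} [IsDomain R]

theorem natDegree_artinSchreierPoly (k : ℕ) : (artinSchreierPoly R k).natDegree = 2 ^ k := by
  induction k with
  | zero => simp [artinSchreierPoly]
  | succ k ih =>
    have hdeg : (X ^ 2 - X : R[X]).natDegree = 2 := by
      rw [natDegree_sub_eq_left_of_natDegree_lt] <;> simp
    rw [artinSchreierPoly, natDegree_comp, hdeg, ih, pow_succ']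

theorem monic_artinSchreierPoly (k : ℕ) : (artinSchreierPoly R k).Monic := by
  induction k with
  | zero => exact monic_X
  | succ k ih =>
    exact (monic_X_pow_sub (by rw [degree_X]; norm_num)).comp ih
      (by rw [natDegree_artinSchreierPoly]; positivity)

end Polynomial

theorem eval_artinSchreierPoly {K : Type*} [CommRing K] [CharP K 2] [Module (ZMod 2) K]
    (k : ℕ) (x : K) : (artinSchreierPoly K k).eval x = (artinSchreier K ^ k) x := by
  induction k with
  | zero => simp [artinSchreierPoly]
  | succ k ih =>
    rw [artinSchreierPoly, eval_comp, ih, pow_succ' (artinSchreier K), Module.End.mul_apply,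
      artinSchreier_apply, eval_sub, eval_pow, eval_X]

section FiniteField

variable {K : Type*} [Field K] [Finite K] [CharP K 2] [Module (ZMod 2) K]

theorem artinSchreier_pow_two_pow_eq_zero {m : ℕ} (hK : Nat.card K = 2 ^ 2 ^ m) :
    artinSchreier K ^ 2 ^ m = 0 := by
  cases nonempty_fintype K
  ext x
  rw [artinSchreier_pow_two_pow_apply, ← hK, Nat.card_eq_fintype_card, FiniteField.pow_card,
    sub_self, LinearMap.zero_apply]

theorem exists_artinSchreier_pow_apply_ne_zero {k : ℕ} (hk : 2 ^ k < Nat.card K) :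
    ∃ γ : K, (artinSchreier K ^ k) γ ≠ 0 := by
  obtain ⟨γ, hγ⟩ := exists_eval_ne_zero_of_natDegree_lt_card (artinSchreierPoly K k)
    (monic_artinSchreierPoly k).ne_zero
    (by rw [natDegree_artinSchreierPoly, ← Nat.cast_card]; exact_mod_cast hk)
  exact ⟨γ, by rwa [eval_artinSchreierPoly] at hγ⟩

end FiniteField

theorem exists_basis_of_artinSchreier_pow {K : Type*} [CommRing K] [IsDomain K] [CharP K 2]
    [Module (ZMod 2) K] {n : ℕ} (hn : Module.finrank (ZMod 2) K = n) {γ : K}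
    (hγ₀ : (artinSchreier K ^ n) γ = 0)
    (hγ : (artinSchreier K ^ (n - 1)) γ ≠ 0) :
    ∃ b : Module.Basis (Fin n) (ZMod 2) K, (∀ h : 0 < n, b ⟨0, h⟩ = 1) ∧
      ∀ i : ℕ, ∀ h : i + 1 < n, b ⟨i + 1, h⟩ ^ 2 - b ⟨i + 1, h⟩ = b ⟨i, by omega⟩ := by
  obtain ⟨m, rfl⟩ : ∃ m, n = m + 1 :=
    Nat.exists_eq_add_one_of_ne_zero (by rintro rfl; exact hγ hγ₀)
  rw [Nat.add_sub_cancel] at hγ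
  have hone : (artinSchreier K ^ m) γ = 1 := by
    refine (artinSchreier_eq_zero_iff.1 ?_).resolve_left hγ
    rwa [← Module.End.mul_apply, ← pow_succ']
  have hli := ((artinSchreier K).linearIndependent_pow_apply hγ₀ hγ).comp Fin.rev Fin.rev_injective
  refine ⟨basisOfLinearIndependentOfCardEqFinrank hli (by simp [hn]), fun _ => ?_, fun i hi => ?_⟩
  · simpa [Fin.rev] using hone
  · simp only [coe_basisOfLinearIndependentOfCardEqFinrank, Function.comp_apply, Fin.val_rev]
    rw [← artinSchreier_apply, ← Module.End.mul_apply, ← pow_succ']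
    congr 2
    omega

/-- For every positive integer `L`, there exists a Cantor basis of
`GF(2^(2^L))` over `GF(2)`: a basis `β₁, …, β_{2^L}` with `β₁ = 1` and
`βᵢ² - βᵢ = β_{i-1}` for `2 ≤ i ≤ 2^L`. -/
theorem cantor_basis_exists (L : ℕ) :
    ∃ b : Module.Basis (Fin (2 ^ L)) (ZMod 2) (GaloisField 2 (2 ^ L)),
      b ⟨0, by positivity⟩ = 1 ∧
      ∀ i : ℕ, ∀ h : i + 1 < 2 ^ L,
        (b ⟨i + 1, h⟩) ^ 2 - b ⟨i + 1, h⟩ = b ⟨i, by omega⟩ := by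
  have hcard : Nat.card (GaloisField 2 (2 ^ L)) = 2 ^ 2 ^ L := GaloisField.card 2 _ (by positivity)
  obtain ⟨γ, hγ⟩ := exists_artinSchreier_pow_apply_ne_zero (K := GaloisField 2 (2 ^ L))
    (k := 2 ^ L - 1) (hcard ▸ Nat.pow_lt_pow_right one_lt_two (Nat.sub_lt (by positivity) one_pos))
  obtain ⟨b, hb₀, hb⟩ := exists_basis_of_artinSchreier_pow (GaloisField.finrank 2 (by positivity))
    (by rw [artinSchreier_pow_two_pow_eq_zero hcard, LinearMap.zero_apply]) hγ
  exact ⟨b, hb₀ _, hb⟩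
end

section
/- Let k be a positive integer and f(x) a polynomial of degree < 2^m over an algebraic extension of GF(2), with k ≤ m. Then there exists a unique tuple (f̂₀, ..., f̂_{2^k - 1}) of polynomials, each of degree < 2^{m-k}, such that f(x) = Σ_{i=0}^{2^k - 1} x^i · f̂_i(x^{2^k} - x). -/
open Polynomial

/-! With `q = X ^ 2 ^ k - X`, monic of degree `2 ^ k`, expanding each `ĝᵢ = ∑ⱼ aᵢⱼ Xʲ` gives
`∑ᵢ Xⁱ ĝᵢ(q) = ∑ⱼ cⱼ qʲ` with `cⱼ = ∑ᵢ aᵢⱼ Xⁱ`. Transposing the coefficient matrix `(aᵢⱼ)` is a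
bijection between families `(ĝᵢ)ᵢ<2^k` of degree `< 2 ^ (m - k)` and families `(cⱼ)ⱼ<2^(m-k)` of
degree `< 2 ^ k`, so the claim is the existence and uniqueness of the `q`-adic expansion of `f`
with `2 ^ (m - k)` digits, which comes from repeated division with remainder by `q`. -/

namespace Polynomial

variable {R : Type*} [CommRing R]

theorem sum_fin_succ_mul_pow {N : ℕ} (c : Fin (N + 1) → R[X]) (q : R[X]) :
    ∑ j : Fin (N + 1), c j * q ^ (j : ℕ) = c 0 + q * ∑ j : Fin N, c j.succ * q ^ (j : ℕ) := by
  rw [Fin.sum_univ_succ, Finset.mul_sum]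
  simp only [Fin.val_zero, pow_zero, mul_one, Fin.val_succ, pow_succ]
  congr 1
  exact Finset.sum_congr rfl fun j _ => by ring

theorem degree_divByMonic_lt_natDegree_mul {q f : R[X]} (hq : q.Monic) {N : ℕ}
    (hf : f.degree < ↑(q.natDegree * (N + 1))) : (f /ₘ q).degree < ↑(q.natDegree * N) := by
  nontriviality R
  by_cases hfq : f.degree < q.degree
  · rw [(divByMonic_eq_zero_iff hq).mpr hfq, degree_zero]
    exact WithBot.bot_lt_coe _
  have hf0 : f ≠ 0 := fun h => hfq (by simpa [h, bot_lt_iff_ne_bot] using hq.ne_zero)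
  have hqf : q.natDegree ≤ f.natDegree := natDegree_le_natDegree (not_lt.mp hfq)
  have hfN : f.natDegree < q.natDegree * N + q.natDegree :=
    (natDegree_lt_iff_degree_lt hf0).mpr hf
  refine degree_le_natDegree.trans_lt ?_
  rw [natDegree_divByMonic f hq]
  exact_mod_cast (by omega : f.natDegree - q.natDegree < q.natDegree * N)

theorem exists_sum_mul_pow_eq [Nontrivial R] {q : R[X]} (hq : q.Monic) :
    ∀ (N : ℕ) (f : R[X]), f.degree < ↑(q.natDegree * N) →
      ∃ c : Fin N → R[X], (∀ j, (c j).degree < q.degree) ∧ f = ∑ j, c j * q ^ (j : ℕ)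
  | 0, f, hf => ⟨Fin.elim0, finZeroElim, by simpa using hf⟩
  | N + 1, f, hf => by
    obtain ⟨c, hc, hfc⟩ :=
      exists_sum_mul_pow_eq hq N (f /ₘ q) (degree_divByMonic_lt_natDegree_mul hq hf)
    refine ⟨Fin.cons (f %ₘ q) c, Fin.cases (degree_modByMonic_lt f hq) hc, ?_⟩
    rw [sum_fin_succ_mul_pow]
    simp only [Fin.cons_zero, Fin.cons_succ]
    rw [← hfc, modByMonic_add_div]

theorem sum_mul_pow_injective {q : R[X]} (hq : q.Monic) :
    ∀ {N : ℕ} {c c' : Fin N → R[X]}, (∀ j, (c j).degree < q.degree) →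
      (∀ j, (c' j).degree < q.degree) →
      ∑ j, c j * q ^ (j : ℕ) = ∑ j, c' j * q ^ (j : ℕ) → c = c'
  | 0, _, _, _, _, _ => Subsingleton.elim _ _
  | N + 1, c, c', hc, hc', h => by
    rw [sum_fin_succ_mul_pow, sum_fin_succ_mul_pow] at h
    obtain ⟨hdiv, hmod⟩ := div_modByMonic_unique _ _ hq ⟨h, hc 0⟩
    obtain ⟨hdiv', hmod'⟩ := div_modByMonic_unique _ _ hq ⟨rfl, hc' 0⟩
    have htail := sum_mul_pow_injective hq (fun j => hc j.succ) (fun j => hc' j.succ)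
      (hdiv.symm.trans hdiv')
    funext j
    exact Fin.cases (hmod.symm.trans hmod') (congrFun htail) j

theorem sum_fin_C_coeff_mul_X_pow {p : R[X]} {N : ℕ} (hp : p.degree < N) :
    ∑ j : Fin N, C (p.coeff j) * X ^ (j : ℕ) = p := by
  simp only [C_mul_X_pow_eq_monomial]
  exact (sum_fin _ (fun _ => monomial_zero_right _) hp).trans (sum_monomial_eq p)

noncomputable def transposeCoeffs {M : ℕ} (N : ℕ) (g : Fin M → R[X]) : Fin N → R[X] :=
  fun j => ∑ i : Fin M, C ((g i).coeff j) * X ^ (i : ℕ)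

variable {M N : ℕ}

theorem degree_transposeCoeffs_lt (g : Fin M → R[X]) (j : Fin N) :
    (transposeCoeffs N g j).degree < M :=
  degree_sum_fin_lt _

theorem coeff_transposeCoeffs (g : Fin M → R[X]) (j : Fin N) (i : Fin M) :
    (transposeCoeffs N g j).coeff i = (g i).coeff j := by
  simp [transposeCoeffs, Fin.val_inj]

theorem transposeCoeffs_transposeCoeffs {g : Fin M → R[X]} (hg : ∀ i, (g i).degree < N) :
    transposeCoeffs M (transposeCoeffs N g) = g := by
  funext i
  calc ∑ j : Fin N, C ((transposeCoeffs N g j).coeff i) * X ^ (j : ℕ)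
      = ∑ j : Fin N, C ((g i).coeff j) * X ^ (j : ℕ) := by simp only [coeff_transposeCoeffs]
    _ = g i := sum_fin_C_coeff_mul_X_pow (hg i)

theorem sum_X_pow_mul_comp_eq_sum_transposeCoeffs_mul_pow {g : Fin M → R[X]}
    (hg : ∀ i, (g i).degree < N) (q : R[X]) :
    ∑ i : Fin M, X ^ (i : ℕ) * (g i).comp q = ∑ j : Fin N, transposeCoeffs N g j * q ^ (j : ℕ) := by
  calc ∑ i : Fin M, X ^ (i : ℕ) * (g i).comp q
      = ∑ i : Fin M, ∑ j : Fin N, C ((g i).coeff j) * X ^ (i : ℕ) * q ^ (j : ℕ) := by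
        refine Finset.sum_congr rfl fun i _ => ?_
        conv_lhs => rw [← sum_fin_C_coeff_mul_X_pow (hg i)]
        simp only [sum_comp, mul_comp, C_comp, X_pow_comp, Finset.mul_sum]
        exact Finset.sum_congr rfl fun j _ => by ring
    _ = ∑ j : Fin N, transposeCoeffs N g j * q ^ (j : ℕ) := by
        rw [Finset.sum_comm]
        simp only [transposeCoeffs, Finset.sum_mul]

end Polynomial

theorem gao_mateer_expansion_general (K : Type*) [Field K]
    (k m : ℕ) (hk : 0 < k)
    (f : K[X]) (hf : f.degree < ((2 ^ m : ℕ) : WithBot ℕ)) :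
    ∃! g : Fin (2 ^ k) → K[X],
      (∀ i, (g i).degree < ((2 ^ (m - k) : ℕ) : WithBot ℕ)) ∧
      f = ∑ i : Fin (2 ^ k), X ^ (i : ℕ) * (g i).comp (X ^ (2 ^ k) - X) := by
  set q : K[X] := X ^ (2 ^ k) - X
  have hk2 : 1 < 2 ^ k := Nat.one_lt_two_pow hk.ne'
  have hq : q.Monic := monic_X_pow_sub (by rw [degree_X]; exact_mod_cast hk2)
  have hqdeg : q.natDegree = 2 ^ k := FiniteField.X_pow_card_sub_X_natDegree_eq K hk2
  have hfq : f.degree < ↑(q.natDegree * 2 ^ (m - k)) := by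
    refine hf.trans_le (WithBot.coe_le_coe.mpr ?_)
    rw [hqdeg, ← pow_add]
    exact Nat.pow_le_pow_right two_pos (by omega)
  obtain ⟨c, hc, hfc⟩ := exists_sum_mul_pow_eq hq _ f hfq
  have hqdeg' : q.degree = ((2 ^ k : ℕ) : WithBot ℕ) := by
    rw [degree_eq_natDegree hq.ne_zero, hqdeg]
  rw [hqdeg'] at hc
  refine ⟨transposeCoeffs _ c, ⟨degree_transposeCoeffs_lt c, ?_⟩, ?_⟩
  · rw [sum_X_pow_mul_comp_eq_sum_transposeCoeffs_mul_pow (degree_transposeCoeffs_lt c),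
      transposeCoeffs_transposeCoeffs hc, hfc]
  · rintro g ⟨hg, hfg⟩
    rw [sum_X_pow_mul_comp_eq_sum_transposeCoeffs_mul_pow hg] at hfg
    have hcg := sum_mul_pow_injective hq (hqdeg' ▸ hc)
      (hqdeg' ▸ degree_transposeCoeffs_lt g) (hfc.symm.trans hfg)
    rw [hcg, transposeCoeffs_transposeCoeffs hg]

/-- Gao–Mateer expansion: over an algebraic extension `K` of `GF(2)`, every
polynomial `f` of degree `< 2^m` has a unique expansion
`f(x) = ∑_{i<2^k} xⁱ · f̂ᵢ(x^(2^k) - x)` with each `f̂ᵢ` of degree `< 2^(m-k)`,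
for `1 ≤ k ≤ m`. -/
theorem gao_mateer_expansion (K : Type*) [Field K] [Algebra (ZMod 2) K]
    [Algebra.IsAlgebraic (ZMod 2) K]
    (k m : ℕ) (hk : 0 < k) (hkm : k ≤ m)
    (f : K[X]) (hf : f.degree < ((2 ^ m : ℕ) : WithBot ℕ)) :
    ∃! g : Fin (2 ^ k) → K[X],
      (∀ i, (g i).degree < ((2 ^ (m - k) : ℕ) : WithBot ℕ)) ∧
      f = ∑ i : Fin (2 ^ k), X ^ (i : ℕ) * (g i).comp (X ^ (2 ^ k) - X) :=
  gao_mateer_expansion_general K k m hk f hf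
end

section
/- Let K be a field of characteristic 2, k a positive integer, and f a polynomial over K with Gao-Mateer expansion f(x) = Σ_{i=0}^{2^k - 1} x^i f̂_i(x^{2^k} - x). For any c ∈ K, the remainder of f modulo the polynomial x^{2^k} - x - c equals Σ_{i=0}^{2^k - 1} f̂_i(c) · x^i. -/
/-!
Modulo `q - c` we have `q ≡ c`, so each summand `xⁱ · f̂ᵢ(q)` of the expansion, with
`q = x^(2^k) - x`, is congruent to `f̂ᵢ(c) · xⁱ`. The resulting sum has degree `< 2^k`,
the degree of the monic modulus, hence it is the remainder.
-/

open Polynomial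

namespace Polynomial

variable {R : Type*}

theorem sub_C_dvd_comp_sub_C_eval [CommRing R] (p q : R[X]) (a : R) :
    q - C a ∣ p.comp q - C (p.eval a) := by
  obtain ⟨d, hd⟩ := X_sub_C_dvd_sub_C_eval (p := p) (a := a)
  refine ⟨d.comp q, ?_⟩
  simpa only [sub_comp, X_comp, C_comp, mul_comp] using congrArg (comp · q) hd

section Ring

variable [Ring R] [Nontrivial R] {n : ℕ}

theorem degree_X_add_C_lt_of_one_lt (hn : 1 < n) (c : R) : degree (X + C c) < n := by
  rw [degree_X_add_C]
  exact_mod_cast hn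

theorem monic_X_pow_sub_X_sub_C (hn : 1 < n) (c : R) : (X ^ n - X - C c : R[X]).Monic := by
  rw [sub_sub]
  exact monic_X_pow_sub (degree_X_add_C_lt_of_one_lt hn c)

theorem degree_X_pow_sub_X_sub_C (hn : 1 < n) (c : R) :
    (X ^ n - X - C c : R[X]).degree = n := by
  rw [sub_sub, degree_sub_eq_left_of_degree_lt] <;>
    rw [degree_X_pow]
  exact degree_X_add_C_lt_of_one_lt hn c

end Ring

theorem sum_X_pow_mul_comp_modByMonic [CommRing R] [Nontrivial R] {n : ℕ} (g : Fin n → R[X])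
    (q : R[X]) (c : R) (hmonic : (q - C c).Monic) (hdeg : (q - C c).degree = n) :
    (∑ i : Fin n, X ^ (i : ℕ) * (g i).comp q) %ₘ (q - C c) =
      ∑ i : Fin n, C ((g i).eval c) * X ^ (i : ℕ) := by
  have hdvd : q - C c ∣ ∑ i : Fin n, X ^ (i : ℕ) * (g i).comp q -
      ∑ i : Fin n, C ((g i).eval c) * X ^ (i : ℕ) := by
    rw [← Finset.sum_sub_distrib]
    refine Finset.dvd_sum fun i _ => ?_
    rw [mul_comm (C _), ← mul_sub]
    exact dvd_mul_of_dvd_right (sub_C_dvd_comp_sub_C_eval (g i) q c) _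
  rw [modByMonic_eq_of_dvd_sub hmonic hdvd, (modByMonic_eq_self_iff hmonic).2]
  rw [hdeg]
  exact degree_sum_fin_lt _

end Polynomial

theorem gao_mateer_remainder_general (K : Type*) [Field K]
    (k : ℕ) (hk : 0 < k) (f : K[X]) (fh : Fin (2 ^ k) → K[X])
    (hexp : f = ∑ i : Fin (2 ^ k), X ^ (i : ℕ) * (fh i).comp (X ^ (2 ^ k) - X))
    (c : K) :
    f %ₘ (X ^ (2 ^ k) - X - C c) =
      ∑ i : Fin (2 ^ k), C ((fh i).eval c) * X ^ (i : ℕ) := by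
  have h2k : 1 < 2 ^ k := Nat.one_lt_two_pow hk.ne'
  subst hexp
  exact sum_X_pow_mul_comp_modByMonic fh _ c
    (monic_X_pow_sub_X_sub_C h2k c) (degree_X_pow_sub_X_sub_C h2k c)

/-- Remaindering mechanism: if `f(x) = ∑_{i<2^k} xⁱ · f̂ᵢ(x^(2^k) - x)` is the
Gao–Mateer expansion of `f` over a field `K` of characteristic 2, then for any
`c ∈ K` the remainder of `f` modulo `x^(2^k) - x - c` is
`∑_{i<2^k} f̂ᵢ(c) · xⁱ`. -/
theorem gao_mateer_remainder (K : Type*) [Field K] [CharP K 2]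
    (k : ℕ) (hk : 0 < k) (f : K[X]) (fh : Fin (2 ^ k) → K[X])
    (hexp : f = ∑ i : Fin (2 ^ k), X ^ (i : ℕ) * (fh i).comp (X ^ (2 ^ k) - X))
    (c : K) :
    f %ₘ (X ^ (2 ^ k) - X - C c) =
      ∑ i : Fin (2 ^ k), C ((fh i).eval c) * X ^ (i : ℕ) :=
  gao_mateer_remainder_general K k hk f fh hexp c
end

section
/- Define E₀ : ℕ → ℕ by E₀(1) = 1 and, for m > 1 with l = ⌈log₂ m⌉, suppose E₀(m) ≤ 2^{m - 2^{l-1}}·E₀(2^{l-1}) + 2^{2^{l-1}}·E₀(m - 2^{l-1}). Then E₀(m) ≤ 2^{m-1}·m for all m ≥ 1. -/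
/-! Split `m = k + (m - k)` with `k = 2^(⌈log₂ m⌉ - 1)`, so that both parts are positive and
smaller than `m`. The bound `2^(n-1)·n` is exactly additive under the recursion:
`2^b·(2^(a-1)·a) + 2^a·(2^(b-1)·b) = 2^(a+b-1)·(a+b)`, so strong induction closes. -/

lemma two_pow_mul_bound_add {a b : ℕ} (ha : 1 ≤ a) (hb : 1 ≤ b) :
    2 ^ b * (2 ^ (a - 1) * a) + 2 ^ a * (2 ^ (b - 1) * b) = 2 ^ (a + b - 1) * (a + b) := by
  rw [← mul_assoc, ← mul_assoc, ← pow_add, ← pow_add,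
    show b + (a - 1) = a + b - 1 by omega, show a + (b - 1) = a + b - 1 by omega, mul_add]

/-- If `E₀(1) = 1` and for `m > 1` with `l = ⌈log₂ m⌉`,
`E₀(m) ≤ 2^(m - 2^(l-1))·E₀(2^(l-1)) + 2^(2^(l-1))·E₀(m - 2^(l-1))`,
then `E₀(m) ≤ 2^(m-1)·m` for all `m ≥ 1`. -/
theorem eval_mult_count (E : ℕ → ℕ) (h1 : E 1 = 1)
    (hrec : ∀ m : ℕ, 1 < m → ∀ l : ℕ, l = Nat.clog 2 m →
      E m ≤ 2 ^ (m - 2 ^ (l - 1)) * E (2 ^ (l - 1)) +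
            2 ^ (2 ^ (l - 1)) * E (m - 2 ^ (l - 1))) :
    ∀ m : ℕ, 1 ≤ m → E m ≤ 2 ^ (m - 1) * m := by
  intro m
  induction m using Nat.strong_induction_on with
  | _ m ih =>
    intro hm
    rcases hm.eq_or_lt with rfl | hm
    · simp [h1]
    set k := 2 ^ (Nat.clog 2 m - 1)
    have hkm : k < m := Nat.pow_pred_clog_lt_self one_lt_two hm
    have hk1 : 1 ≤ k := Nat.one_le_two_pow
    calc E m ≤ 2 ^ (m - k) * E k + 2 ^ k * E (m - k) := hrec m hm _ rfl
      _ ≤ 2 ^ (m - k) * (2 ^ (k - 1) * k) + 2 ^ k * (2 ^ (m - k - 1) * (m - k)) := by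
          gcongr
          · exact ih k hkm hk1
          · exact ih (m - k) (by omega) (by omega)
      _ = 2 ^ (m - 1) * m := by
          rw [two_pow_mul_bound_add hk1 (by omega), Nat.add_sub_cancel' hkm.le]
end
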